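/- arXiv:1407.2787 — 5 statements merged into one kernel-verified Lean document; each statement's English description precedes it below -/
import Mathlib

section
/- For real numbers b, c with -1 < b ≤ c < 1 and s ∈ [0, π], the inequality ((1-b)²/b)·(b·sin s)/(1+b²-2b·cos s) ≥ ((1-c)²/c)·(c·sin s)/(1+c²-2c·cos s) holds; equivalently, (1-b)²·sin s/(1+b²-2b·cos s) ≥ (1-c)²·sin s/(1+c²-2c·cos s). -/
open Real

/-- The function b ↦ ((1-b)²/b)·g(b,s) = (1-b)²·sin s/(1+b²-2b·cos s) is
nonincreasing in b on (-1,1) for each fixed s ∈ [0,π]. -/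
theorem stmt_0 (b c s : ℝ) (hb : -1 < b) (hbc : b ≤ c) (hc : c < 1)
    (hs0 : 0 ≤ s) (hsπ : s ≤ π) :
    (1 - c)^2 * Real.sin s / (1 + c^2 - 2*c*Real.cos s) ≤
      (1 - b)^2 * Real.sin s / (1 + b^2 - 2*b*Real.cos s) := by
  have hb1 : b < 1 := lt_of_le_of_lt hbc hc
  have hc1 : -1 < c := lt_of_lt_of_le hb hbc
  have hcos1 : Real.cos s ≤ 1 := Real.cos_le_one s
  have hcos2 : -1 ≤ Real.cos s := Real.neg_one_le_cos s
  have hsin : 0 ≤ Real.sin s := Real.sin_nonneg_of_nonneg_of_le_pi hs0 hsπ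
  have hpyth := Real.sin_sq_add_cos_sq s
  have hbcos : b * Real.cos s < 1 := by
    have h1 : |b * Real.cos s| ≤ |b| := by
      rw [abs_mul]
      exact mul_le_of_le_one_right (abs_nonneg _) (Real.abs_cos_le_one s)
    have h2 : |b| < 1 := abs_lt.2 ⟨hb, hb1⟩
    exact lt_of_le_of_lt (le_trans (le_abs_self _) h1) h2
  have hccos : c * Real.cos s < 1 := by
    have h1 : |c * Real.cos s| ≤ |c| := by
      rw [abs_mul]
      exact mul_le_of_le_one_right (abs_nonneg _) (Real.abs_cos_le_one s)
    have h2 : |c| < 1 := abs_lt.2 ⟨hc1, hc⟩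
    exact lt_of_le_of_lt (le_trans (le_abs_self _) h1) h2
  have hdb : 0 < 1 + b^2 - 2*b*Real.cos s := by
    nlinarith [mul_pos (sub_pos.2 hbcos) (sub_pos.2 hbcos), sq_nonneg (b * Real.sin s)]
  have hdc : 0 < 1 + c^2 - 2*c*Real.cos s := by
    nlinarith [mul_pos (sub_pos.2 hccos) (sub_pos.2 hccos), sq_nonneg (c * Real.sin s)]
  have hbc1 : 0 ≤ 1 - b*c := by
    have h2 : |b| < 1 := abs_lt.2 ⟨hb, hb1⟩
    have h3 : |c| < 1 := abs_lt.2 ⟨hc1, hc⟩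
    nlinarith [abs_nonneg b, abs_nonneg c, neg_abs_le b, le_abs_self b, neg_abs_le c, le_abs_self c, mul_le_mul h2.le h3.le (abs_nonneg c) (by linarith [abs_nonneg b])]
  rw [div_le_div_iff₀ hdc hdb]
  nlinarith [mul_nonneg (mul_nonneg (mul_nonneg hsin (by linarith : (0:ℝ) ≤ 1 - Real.cos s)) (by linarith : (0:ℝ) ≤ c - b)) hbc1]
end

section
/- For -1 < b < c < 1 and s ∈ (0, π), the strict inequality (1-b)²·sin s/(1+b²-2b·cos s) > (1-c)²·sin s/(1+c²-2c·cos s) holds. -/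
open Real

/-- Strict version: for -1 < b < c < 1 and s ∈ (0,π),
(1-b)²·sin s/(1+b²-2b·cos s) > (1-c)²·sin s/(1+c²-2c·cos s). -/
theorem stmt_1 (b c s : ℝ) (hb : -1 < b) (hbc : b < c) (hc : c < 1)
    (hs0 : 0 < s) (hsπ : s < π) :
    (1 - c)^2 * Real.sin s / (1 + c^2 - 2*c*Real.cos s) <
      (1 - b)^2 * Real.sin s / (1 + b^2 - 2*b*Real.cos s) := by
  have hsin : 0 < Real.sin s := Real.sin_pos_of_pos_of_lt_pi hs0 hsπ
  have ht1 : Real.cos s < 1 := by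
    have := Real.cos_lt_cos_of_nonneg_of_le_pi le_rfl (le_of_lt hsπ) hs0
    simpa using this
  have htm1 : -1 < Real.cos s := by
    have := Real.cos_lt_cos_of_nonneg_of_le_pi (le_of_lt hs0) le_rfl hsπ
    simpa using this
  set t := Real.cos s
  have hdb : 0 < 1 + b^2 - 2*b*t := by nlinarith [sq_nonneg (b - t), sq_nonneg (b + t)]
  have hdc : 0 < 1 + c^2 - 2*c*t := by nlinarith [sq_nonneg (c - t), sq_nonneg (c + t)]
  rw [div_lt_div_iff₀ hdc hdb]
  have key : (1 - c)^2 * (1 + b^2 - 2*b*t) < (1 - b)^2 * (1 + c^2 - 2*c*t) := by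
      nlinarith [mul_pos (mul_pos (sub_pos.mpr ht1) (sub_pos.mpr hbc))
        (by nlinarith : (0:ℝ) < 1 - b*c)]
  nlinarith [mul_pos hsin (sub_pos.mpr key)]
end

section
/- For 0 < b < 1 and t ∈ [0,π], one has ((1-b/2)²·sin t/(1+(b/2)²-b·cos t))² ≥ ((1-b)²·sin t/(1+b²-2b·cos t))·sin t, with strict inequality for t ∈ (0,π). -/
open Real

lemma key_le (b c : ℝ) (hb0 : 0 < b) (hb1 : b < 1) (hc0 : -1 ≤ c) (hc1 : c ≤ 1) :
    (1 - b)^2 * (1 + (b/2)^2 - b*c)^2 ≤ ((1 - b/2)^2)^2 * (1 + b^2 - 2*b*c) := by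
  nlinarith [mul_nonneg (mul_nonneg hb0.le (sub_nonneg.2 hc1)) (mul_nonneg hb0.le (by nlinarith : (0:ℝ) ≤ 1/2 - 3*b^2/8)),
    mul_nonneg (sq_nonneg (1-b)) (mul_nonneg (mul_nonneg hb0.le (sub_nonneg.2 hc1)) (by nlinarith : (0:ℝ) ≤ 2*b - b*(1-c))),
    sq_nonneg (1-c), sq_nonneg b, mul_pos hb0 hb0]

lemma key_lt (b c : ℝ) (hb0 : 0 < b) (hb1 : b < 1) (hc0 : -1 ≤ c) (hc1 : c < 1) :
    (1 - b)^2 * (1 + (b/2)^2 - b*c)^2 < ((1 - b/2)^2)^2 * (1 + b^2 - 2*b*c) := by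
  nlinarith [mul_pos (mul_pos hb0 (sub_pos.2 hc1)) (mul_pos hb0 (by nlinarith : (0:ℝ) < 1/2 - 3*b^2/8)),
    mul_nonneg (sq_nonneg (1-b)) (mul_nonneg (mul_nonneg hb0.le (sub_nonneg.2 hc1.le)) (by nlinarith : (0:ℝ) ≤ 2*b - b*(1-c))),
    sq_nonneg (1-c)]

/-- For 0 < b < 1 and t ∈ [0,π],
((1-b/2)²·sin t/(1+(b/2)²-b·cos t))² ≥ ((1-b)²·sin t/(1+b²-2b·cos t))·sin t,
with strict inequality for t ∈ (0,π). -/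
theorem stmt_3 (b t : ℝ) (hb0 : 0 < b) (hb1 : b < 1) (ht0 : 0 ≤ t) (htπ : t ≤ π) :
    ((1 - b)^2 * Real.sin t / (1 + b^2 - 2*b*Real.cos t)) * Real.sin t ≤
      ((1 - b/2)^2 * Real.sin t / (1 + (b/2)^2 - b*Real.cos t))^2 ∧
    (0 < t → t < π →
      ((1 - b)^2 * Real.sin t / (1 + b^2 - 2*b*Real.cos t)) * Real.sin t <
        ((1 - b/2)^2 * Real.sin t / (1 + (b/2)^2 - b*Real.cos t))^2) := by
  have hc1 := Real.cos_le_one t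
  have hc0 := Real.neg_one_le_cos t
  have hs : 0 ≤ Real.sin t := Real.sin_nonneg_of_nonneg_of_le_pi ht0 htπ
  have hD : 0 < 1 + b^2 - 2*b*Real.cos t := by nlinarith
  have hE : 0 < 1 + (b/2)^2 - b*Real.cos t := by nlinarith
  constructor
  · rw [div_pow, div_mul_eq_mul_div, div_le_div_iff₀ hD (pow_pos hE 2)]
    have := key_le b (Real.cos t) hb0 hb1 hc0 hc1
    nlinarith [sq_nonneg (Real.sin t), mul_nonneg (sq_nonneg (Real.sin t)) (sub_nonneg.2 this)]
  · intro ht0' htπ'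
    have hs' : 0 < Real.sin t := Real.sin_pos_of_pos_of_lt_pi ht0' htπ'
    have hc1' : Real.cos t < 1 := by
      nlinarith [Real.sin_sq_add_cos_sq t]
    rw [div_pow, div_mul_eq_mul_div, div_lt_div_iff₀ hD (pow_pos hE 2)]
    have := key_lt b (Real.cos t) hb0 hb1 hc0 hc1'
    nlinarith [mul_pos (mul_pos hs' hs') (sub_pos.2 this)]
end

section
/- (q-Binomial theorem) For q ∈ (0,1), a ∈ ℂ, and z ∈ ℂ with |z| < 1, one has ∑_{n=0}^∞ ((a;q)_n/(q;q)_n)·zⁿ = (az;q)_∞/(z;q)_∞, where (x;q)_n = ∏_{k=0}^{n-1}(1-x·q^k). -/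
open Complex

/-- Finite q-Pochhammer symbol (x;q)_n = ∏_{k=0}^{n-1}(1 - x q^k) in ℂ. -/
noncomputable def qPochC (x q : ℂ) (n : ℕ) : ℂ := ∏ k ∈ Finset.range n, (1 - x * q ^ k)

/-- Infinite q-Pochhammer symbol (x;q)_∞ = ∏_{k=0}^∞ (1 - x q^k) in ℂ. -/
noncomputable def qPochInfC (x q : ℂ) : ℂ := ∏' k : ℕ, (1 - x * q ^ k)

/-! The series `S(w) = ∑ cₙ wⁿ`, `cₙ = (a;q)ₙ/(q;q)ₙ`, satisfies `(1 - w) S(w) = (1 - a w) S(q w)`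
because `cₙ₊₁ (1 - qⁿ⁺¹) = cₙ (1 - a qⁿ)`. Iterating gives `S(z) (z;q)_N = (az;q)_N S(qᴺ z)`. The
coefficients converge (to `(a;q)_∞/(q;q)_∞`), hence are bounded, so `S` is continuous at `0` with
`S(0) = 1`, and `N → ∞` yields `S(z) (z;q)_∞ = (az;q)_∞`, where `(z;q)_∞ ≠ 0` for `‖z‖ < 1`. -/

open Filter Topology Metric

section PowerSeries

variable {c : ℕ → ℂ} {C : ℝ}

lemma norm_mul_pow_le_of_norm_le (hc : ∀ n, ‖c n‖ ≤ C) {w : ℂ} {r : ℝ} (hw : ‖w‖ ≤ r) (n : ℕ) :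
    ‖c n * w ^ n‖ ≤ C * r ^ n := by
  rw [norm_mul, norm_pow]
  exact mul_le_mul (hc n) (pow_le_pow_left₀ (norm_nonneg w) hw n) (by positivity)
    ((norm_nonneg _).trans (hc n))

lemma summable_mul_pow_of_norm_le (hc : ∀ n, ‖c n‖ ≤ C) {w : ℂ} (hw : ‖w‖ < 1) :
    Summable fun n ↦ c n * w ^ n :=
  .of_norm_bounded ((summable_geometric_of_lt_one (norm_nonneg w) hw).mul_left C)
    (norm_mul_pow_le_of_norm_le hc le_rfl)

lemma continuousOn_tsum_mul_pow (hc : ∀ n, ‖c n‖ ≤ C) {r : ℝ} (hr₀ : 0 ≤ r) (hr : r < 1) :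
    ContinuousOn (fun w ↦ ∑' n, c n * w ^ n) (closedBall 0 r) :=
  continuousOn_tsum (fun n ↦ by fun_prop) ((summable_geometric_of_lt_one hr₀ hr).mul_left C)
    fun n w hw ↦ norm_mul_pow_le_of_norm_le hc (mem_closedBall_zero_iff.1 hw) n

lemma tsum_mul_zero_pow (c : ℕ → ℂ) : ∑' n, c n * 0 ^ n = c 0 :=
  (tsum_eq_single 0 fun n hn ↦ by simp [hn]).trans (by simp)

end PowerSeries

section qPochhammer

variable {x q : ℂ}

lemma qPochC_succ (x q : ℂ) (n : ℕ) : qPochC x q (n + 1) = qPochC x q n * (1 - x * q ^ n) :=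
  Finset.prod_range_succ _ _

lemma norm_pow_mul_le (hq : ‖q‖ ≤ 1) (N : ℕ) (z : ℂ) : ‖q ^ N * z‖ ≤ ‖z‖ := by
  rw [norm_mul, norm_pow]
  exact mul_le_of_le_one_left (norm_nonneg z) (pow_le_one₀ (norm_nonneg q) hq)

lemma summable_norm_mul_pow (x : ℂ) (hq : ‖q‖ < 1) : Summable fun k ↦ ‖x * q ^ k‖ := by
  simpa [norm_mul, norm_pow] using
    (summable_geometric_of_lt_one (norm_nonneg q) hq).mul_left ‖x‖

lemma tendsto_qPochC (x : ℂ) (hq : ‖q‖ < 1) :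
    Tendsto (qPochC x q) atTop (𝓝 (qPochInfC x q)) := by
  have := multipliable_one_add_of_summable (f := fun k ↦ -(x * q ^ k))
    (by simpa using summable_norm_mul_pow x hq)
  simp only [← sub_eq_add_neg] at this
  exact this.hasProd.tendsto_prod_nat

lemma one_sub_mul_pow_ne_zero (hx : ‖x‖ < 1) (hq : ‖q‖ ≤ 1) (k : ℕ) : 1 - x * q ^ k ≠ 0 := by
  refine sub_ne_zero.2 fun h ↦ ?_
  have := (norm_pow_mul_le hq k x).trans_lt hx
  rw [mul_comm, ← h, norm_one] at this
  exact lt_irrefl _ this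

lemma qPochC_ne_zero (hx : ‖x‖ < 1) (hq : ‖q‖ ≤ 1) (n : ℕ) : qPochC x q n ≠ 0 :=
  Finset.prod_ne_zero_iff.2 fun k _ ↦ one_sub_mul_pow_ne_zero hx hq k

lemma qPochInfC_ne_zero (hx : ‖x‖ < 1) (hq : ‖q‖ < 1) : qPochInfC x q ≠ 0 := by
  have := tprod_one_add_ne_zero_of_summable (f := fun k ↦ -(x * q ^ k))
    (fun k ↦ by simpa [← sub_eq_add_neg] using one_sub_mul_pow_ne_zero hx hq.le k)
    (by simpa using summable_norm_mul_pow x hq)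
  simpa [qPochInfC, ← sub_eq_add_neg] using this

end qPochhammer

section qBinomial

variable {a q : ℂ}

noncomputable def qBinomCoeff (a q : ℂ) (n : ℕ) : ℂ := qPochC a q n / qPochC q q n

lemma qBinomCoeff_zero : qBinomCoeff a q 0 = 1 := by
  simp [qBinomCoeff, qPochC]

lemma qBinomCoeff_succ_mul (a : ℂ) (hq : ‖q‖ < 1) (n : ℕ) :
    qBinomCoeff a q (n + 1) * (1 - q ^ (n + 1)) = qBinomCoeff a q n * (1 - a * q ^ n) := by
  have hpoch := qPochC_ne_zero hq hq.le n
  have hfactor : 1 - q ^ n * q ≠ 0 := mul_comm q (q ^ n) ▸ one_sub_mul_pow_ne_zero hq hq.le n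
  rw [qBinomCoeff, qBinomCoeff, qPochC_succ, qPochC_succ, pow_succ, mul_comm q]
  field_simp

lemma exists_norm_qBinomCoeff_le (a : ℂ) (hq : ‖q‖ < 1) : ∃ C, ∀ n, ‖qBinomCoeff a q n‖ ≤ C := by
  have hlim : Tendsto (qBinomCoeff a q) atTop (𝓝 (qPochInfC a q / qPochInfC q q)) :=
    (tendsto_qPochC a hq).div (tendsto_qPochC q hq) (qPochInfC_ne_zero hq hq)
  obtain ⟨C, hC⟩ := isBounded_iff_forall_norm_le.1 (isBounded_range_of_tendsto _ hlim)
  exact ⟨C, fun n ↦ hC _ (Set.mem_range_self n)⟩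

noncomputable def qBinomSeries (a q w : ℂ) : ℂ := ∑' n, qBinomCoeff a q n * w ^ n

lemma qBinomSeries_functional_eq (a : ℂ) (hq : ‖q‖ < 1) {w : ℂ} (hw : ‖w‖ < 1) :
    (1 - w) * qBinomSeries a q w = (1 - a * w) * qBinomSeries a q (q * w) := by
  obtain ⟨C, hC⟩ := exists_norm_qBinomCoeff_le a hq
  unfold qBinomSeries
  have hqw : ‖q * w‖ < 1 := by
    rw [norm_mul]; exact mul_lt_one_of_nonneg_of_lt_one_left (norm_nonneg q) hq hw.le
  have hS := (summable_mul_pow_of_norm_le hC hw).hasSum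
  have hSq := (summable_mul_pow_of_norm_le hC hqw).hasSum
  -- `S w - S (q w)` has coefficients `cₙ (1 - qⁿ)`, which vanish at `n = 0` and, shifted by
  -- one, are `cₙ (1 - a qⁿ)`: so it equals `w (S w - a S (q w))`.
  have hshift := (hasSum_nat_add_iff' 1).2 (hS.sub hSq)
  have hterm (n : ℕ) :
      qBinomCoeff a q (n + 1) * w ^ (n + 1) - qBinomCoeff a q (n + 1) * (q * w) ^ (n + 1)
        = w * (qBinomCoeff a q n * w ^ n - a * (qBinomCoeff a q n * (q * w) ^ n)) := by
    linear_combination w ^ (n + 1) * qBinomCoeff_succ_mul a hq n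
  simp only [hterm, Finset.sum_range_one, pow_zero, mul_one, sub_self, sub_zero] at hshift
  linear_combination hshift.unique ((hS.sub (hSq.mul_left a)).mul_left w)

lemma qBinomSeries_mul_qPochC (a : ℂ) (hq : ‖q‖ < 1) {z : ℂ} (hz : ‖z‖ < 1) (N : ℕ) :
    qBinomSeries a q z * qPochC z q N = qPochC (a * z) q N * qBinomSeries a q (q ^ N * z) := by
  induction N with
  | zero => simp [qPochC]
  | succ N ih =>
    have hfe := qBinomSeries_functional_eq a hq ((norm_pow_mul_le hq.le N z).trans_lt hz)
    rw [← mul_assoc q, ← pow_succ'] at hfe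
    rw [qPochC_succ, qPochC_succ]
    linear_combination (1 - z * q ^ N) * ih + qPochC (a * z) q N * hfe

lemma tendsto_qBinomSeries_pow_mul (a : ℂ) (hq : ‖q‖ < 1) {z : ℂ} (hz : ‖z‖ < 1) :
    Tendsto (fun N ↦ qBinomSeries a q (q ^ N * z)) atTop (𝓝 1) := by
  obtain ⟨C, hC⟩ := exists_norm_qBinomCoeff_le a hq
  have hcont := continuousOn_tsum_mul_pow hC (norm_nonneg z) hz 0
    (mem_closedBall_self (norm_nonneg z))
  have hpow : Tendsto (fun N ↦ q ^ N * z) atTop (𝓝[closedBall 0 ‖z‖] 0) :=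
    tendsto_nhdsWithin_iff.2
      ⟨by simpa using (tendsto_pow_atTop_nhds_zero_of_norm_lt_one hq).mul_const z,
        .of_forall fun N ↦ mem_closedBall_zero_iff.2 (norm_pow_mul_le hq.le N z)⟩
  have hlim := hcont.tendsto.comp hpow
  simp only [tsum_mul_zero_pow, qBinomCoeff_zero] at hlim
  exact hlim

end qBinomial

/-- q-Binomial theorem: for q ∈ (0,1), a ∈ ℂ, |z| < 1,
∑_{n≥0} ((a;q)_n/(q;q)_n) zⁿ = (az;q)_∞/(z;q)_∞. -/
theorem stmt_10 (q : ℝ) (hq0 : 0 < q) (hq1 : q < 1) (a z : ℂ) (hz : ‖z‖ < 1) :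
    ∑' n : ℕ, qPochC a (q : ℂ) n / qPochC (q : ℂ) (q : ℂ) n * z ^ n
      = qPochInfC (a * z) (q : ℂ) / qPochInfC z (q : ℂ) := by
  have hq : ‖(q : ℂ)‖ < 1 := by rwa [norm_real, Real.norm_of_nonneg hq0.le]
  rw [eq_div_iff (qPochInfC_ne_zero hz hq)]
  have hlhs := (tendsto_qPochC z hq).const_mul (qBinomSeries a q z)
  have hrhs := (tendsto_qPochC (a * z) hq).mul (tendsto_qBinomSeries_pow_mul a hq hz)
  rw [mul_one] at hrhs
  exact tendsto_nhds_unique (hlhs.congr (qBinomSeries_mul_qPochC a hq hz)) hrhs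
end

section
/- For q ∈ (0,1), ν ∈ (0,1), α ∈ (0,1), the expectation of the random variable G with P(G=k) = ((α;q)_∞/(αν;q)_∞)·((ν;q)_k/(q;q)_k)·α^k equals (Ψ_q(log_q α) - Ψ_q(log_q(αν)))/log q, where Ψ_q is the q-digamma function and log_q x = log x/log q. -/
open Real

/-- Finite q-Pochhammer symbol (x;q)_n = ∏_{j=0}^{n-1}(1 - x q^j). -/
noncomputable def qPoch (x q : ℝ) (n : ℕ) : ℝ := ∏ j ∈ Finset.range n, (1 - x * q ^ j)

/-- Infinite q-Pochhammer symbol (x;q)_∞ = ∏_{j=0}^∞ (1 - x q^j). -/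
noncomputable def qPochInf (x q : ℝ) : ℝ := ∏' j : ℕ, (1 - x * q ^ j)

/-- The q-gamma function Γ_q(z) = (1-q)^{1-z} (q;q)_∞ / (q^z;q)_∞. -/
noncomputable def qGamma (q z : ℝ) : ℝ :=
  (1 - q) ^ (1 - z) * qPochInf q q / qPochInf (q ^ z) q

/-- The q-digamma function Ψ_q(Z) = d/dZ log Γ_q(Z). -/
noncomputable def qDigamma (q Z : ℝ) : ℝ := deriv (fun z => Real.log (qGamma q z)) Z

/-!
Write `L(x) = log (x;q)_∞ = ∑ₙ log (1 - x qⁿ)` and `F(x) = ∑ₖ (ν;q)ₖ/(q;q)ₖ xᵏ`. The q-binomial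
theorem `(x;q)_∞ F(x) = (xν;q)_∞` follows from the functional equation
`(1 - x) F(x) = (1 - νx) F(qx)`, iterated `n` times, as `qⁿ x → 0`. Hence `F = exp (L(·ν) - L)`
near `α`, and the mean of `G` is `α F'(α) / F(α) = α (ν L'(αν) - L'(α))`. On the other side
`log Γ_q(z) = (1 - z) log (1 - q) + log (q;q)_∞ - L(q^z)` gives
`Ψ_q(Z) = -log (1 - q) - log q · q^Z L'(q^Z)`, and `q^(log_q a) = a` for `a = α, αν`.
-/

open Filter Topology

variable {q x : ℝ}

lemma one_sub_le_one_sub_mul_pow (hq0 : 0 ≤ q) (hq1 : q ≤ 1) {y r : ℝ} (hy : |y| ≤ r) (n : ℕ) :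
    1 - r ≤ 1 - y * q ^ n := by
  have hqn : q ^ n ≤ 1 := pow_le_one₀ hq0 hq1
  have : y * q ^ n ≤ |y| * q ^ n := mul_le_mul_of_nonneg_right (le_abs_self y) (by positivity)
  nlinarith [abs_nonneg y, pow_nonneg hq0 n]

lemma one_sub_mul_pow_pos (hq0 : 0 ≤ q) (hq1 : q ≤ 1) (hx : |x| < 1) (n : ℕ) :
    0 < 1 - x * q ^ n :=
  (sub_pos.2 hx).trans_le (one_sub_le_one_sub_mul_pow hq0 hq1 le_rfl n)

lemma qPoch_succ (x q : ℝ) (n : ℕ) : qPoch x q (n + 1) = qPoch x q n * (1 - x * q ^ n) :=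
  Finset.prod_range_succ _ n

lemma multipliable_one_sub_mul_pow (hq0 : 0 ≤ q) (hq1 : q < 1) (x : ℝ) :
    Multipliable fun n : ℕ => 1 - x * q ^ n := by
  simpa [sub_eq_add_neg] using
    Real.multipliable_one_add_of_summable ((summable_geometric_of_lt_one hq0 hq1).mul_left (-x))

lemma tendsto_qPoch (hq0 : 0 ≤ q) (hq1 : q < 1) (x : ℝ) :
    Tendsto (qPoch x q) atTop (𝓝 (qPochInf x q)) :=
  (multipliable_one_sub_mul_pow hq0 hq1 x).hasProd.tendsto_prod_nat

lemma qPoch_pos (hq0 : 0 ≤ q) (hq1 : q ≤ 1) (hx : |x| < 1) (n : ℕ) : 0 < qPoch x q n :=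
  Finset.prod_pos fun j _ => one_sub_mul_pow_pos hq0 hq1 hx j

lemma qPoch_nonneg (hq0 : 0 ≤ q) (hq1 : q ≤ 1) (hx : x ≤ 1) (n : ℕ) : 0 ≤ qPoch x q n :=
  Finset.prod_nonneg fun j _ => by nlinarith [pow_le_one₀ (n := j) hq0 hq1, pow_nonneg hq0 j]

lemma qPoch_antitone (hq0 : 0 ≤ q) (hq1 : q ≤ 1) (hx0 : 0 ≤ x) (hx1 : x ≤ 1) :
    Antitone (qPoch x q) := by
  refine antitone_nat_of_succ_le fun n => ?_
  rw [qPoch_succ]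
  exact mul_le_of_le_one_right (qPoch_nonneg hq0 hq1 hx1 n) (by nlinarith [pow_nonneg hq0 n])

lemma qPochInf_le_qPoch (hq0 : 0 ≤ q) (hq1 : q < 1) (hx0 : 0 ≤ x) (hx1 : x ≤ 1) (n : ℕ) :
    qPochInf x q ≤ qPoch x q n :=
  (qPoch_antitone hq0 hq1.le hx0 hx1).le_of_tendsto (tendsto_qPoch hq0 hq1 x) n

noncomputable def qPochLog (q x : ℝ) : ℝ := ∑' n : ℕ, log (1 - x * q ^ n)

noncomputable def qPochLogDeriv (q x : ℝ) : ℝ := ∑' n : ℕ, -q ^ n / (1 - x * q ^ n)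

lemma summable_log_one_sub_mul_pow (hq0 : 0 ≤ q) (hq1 : q < 1) (x : ℝ) :
    Summable fun n : ℕ => log (1 - x * q ^ n) := by
  simpa [sub_eq_add_neg] using
    Real.summable_log_one_add_of_summable ((summable_geometric_of_lt_one hq0 hq1).mul_left (-x))

lemma qPochInf_eq_exp_qPochLog (hq0 : 0 ≤ q) (hq1 : q < 1) (hx : |x| < 1) :
    qPochInf x q = exp (qPochLog q x) :=
  (Real.rexp_tsum_eq_tprod (one_sub_mul_pow_pos hq0 hq1.le hx)
    (summable_log_one_sub_mul_pow hq0 hq1 x)).symm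

lemma qPochInf_pos (hq0 : 0 ≤ q) (hq1 : q < 1) (hx : |x| < 1) : 0 < qPochInf x q := by
  rw [qPochInf_eq_exp_qPochLog hq0 hq1 hx]
  exact exp_pos _

lemma hasDerivAt_qPochLog (hq0 : 0 ≤ q) (hq1 : q < 1) (hx : |x| < 1) :
    HasDerivAt (qPochLog q) (qPochLogDeriv q x) x := by
  obtain ⟨r, hxr, hr1⟩ := exists_between hx
  have hball : ∀ y ∈ Metric.ball (0 : ℝ) r, |y| < r := fun y hy => by
    simpa [Real.dist_eq] using hy
  refine hasDerivAt_tsum_of_isPreconnected (g := fun n y => log (1 - y * q ^ n))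
    (g' := fun n y => -q ^ n / (1 - y * q ^ n))
    ((summable_geometric_of_lt_one hq0 hq1).mul_left (1 - r)⁻¹) Metric.isOpen_ball
    (convex_ball (0 : ℝ) r).isPreconnected (fun n y hy => ?_) (fun n y hy => ?_)
    (Metric.mem_ball_self ((abs_nonneg x).trans_lt hxr))
    (summable_log_one_sub_mul_pow hq0 hq1 0) (by simpa [Real.dist_eq] using hxr)
  · have hpos := one_sub_mul_pow_pos hq0 hq1.le ((hball y hy).trans hr1) n
    simpa using ((hasDerivAt_id y).mul_const (q ^ n)).const_sub 1 |>.log hpos.ne'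
  · have hlb := one_sub_le_one_sub_mul_pow hq0 hq1.le (hball y hy).le n
    have hr : 0 < 1 - r := sub_pos.2 hr1
    rw [norm_div, norm_neg, Real.norm_of_nonneg (pow_nonneg hq0 n),
      Real.norm_of_nonneg (hr.trans_le hlb).le, div_le_iff₀ (hr.trans_le hlb)]
    calc q ^ n = (1 - r)⁻¹ * q ^ n * (1 - r) := by field_simp
      _ ≤ (1 - r)⁻¹ * q ^ n * (1 - y * q ^ n) := by gcongr

lemma summable_mul_pow_of_abs_le {c : ℕ → ℝ} {C : ℝ} (hc : ∀ k, |c k| ≤ C) (hx : |x| < 1) :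
    Summable fun k => c k * x ^ k :=
  .of_norm_bounded ((summable_geometric_of_lt_one (abs_nonneg x) hx).mul_left C) fun k => by
    rw [norm_mul, norm_pow, Real.norm_eq_abs, Real.norm_eq_abs]
    exact mul_le_mul_of_nonneg_right (hc k) (by positivity)

lemma hasDerivAt_tsum_mul_pow {c : ℕ → ℝ} {C : ℝ} (hc : ∀ k, |c k| ≤ C) (hx : |x| < 1) :
    HasDerivAt (fun y => ∑' k, c k * y ^ k) (∑' k, c k * (k * x ^ (k - 1))) x := by
  obtain ⟨r, hxr, hr1⟩ := exists_between hx
  have hr0 : 0 ≤ r := (abs_nonneg x).trans hxr.le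
  have hxball : x ∈ Metric.ball (0 : ℝ) r := by simpa [Real.dist_eq] using hxr
  have hsum : Summable fun k : ℕ => (k : ℝ) * r ^ (k - 1) := by
    refine (summable_nat_add_iff 1).1 ?_
    simpa [add_mul] using summable_pow_mul_geometric_of_norm_lt_one 1
      (by rwa [norm_of_nonneg hr0]) |>.add (summable_geometric_of_lt_one hr0 hr1)
  refine hasDerivAt_tsum_of_isPreconnected (g := fun k y => c k * y ^ k)
    (g' := fun k y => c k * (k * y ^ (k - 1))) (hsum.mul_left C) Metric.isOpen_ball
    (convex_ball (0 : ℝ) r).isPreconnected (fun k y _ => (hasDerivAt_pow k y).const_mul (c k))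
    (fun k y hy => ?_) hxball (summable_mul_pow_of_abs_le hc hx) hxball
  have hyr : |y| < r := by simpa [Real.dist_eq] using hy
  rw [norm_mul, norm_mul, Real.norm_natCast, norm_pow, Real.norm_eq_abs, Real.norm_eq_abs]
  gcongr
  · exact (abs_nonneg _).trans (hc 0)
  · exact hc k

variable {ν : ℝ}

noncomputable def qBinomialSeries (q ν x : ℝ) : ℝ := ∑' k : ℕ, qPoch ν q k / qPoch q q k * x ^ k

lemma abs_qPoch_div_qPoch_le (hq0 : 0 ≤ q) (hq1 : q < 1) (hν0 : 0 ≤ ν) (hν1 : ν ≤ 1) (k : ℕ) :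
    |qPoch ν q k / qPoch q q k| ≤ (qPochInf q q)⁻¹ := by
  have hinf : 0 < qPochInf q q := qPochInf_pos hq0 hq1 (by rwa [abs_of_nonneg hq0])
  have hden : qPochInf q q ≤ qPoch q q k := qPochInf_le_qPoch hq0 hq1 hq0 hq1.le k
  have hnum : qPoch ν q k ≤ 1 := by
    simpa [qPoch] using qPoch_antitone hq0 hq1.le hν0 hν1 (Nat.zero_le k)
  rw [abs_of_nonneg (div_nonneg (qPoch_nonneg hq0 hq1.le hν1 k) (hinf.le.trans hden))]
  calc qPoch ν q k / qPoch q q k ≤ 1 / qPoch q q k := by gcongr; exact (hinf.trans_le hden).le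
    _ ≤ 1 / qPochInf q q := by gcongr
    _ = (qPochInf q q)⁻¹ := one_div _

lemma qPoch_div_qPoch_succ_mul (hq0 : 0 ≤ q) (hq1 : q < 1) (ν : ℝ) (k : ℕ) :
    qPoch ν q (k + 1) / qPoch q q (k + 1) * (1 - q ^ (k + 1))
      = qPoch ν q k / qPoch q q k * (1 - ν * q ^ k) := by
  have habs : |q| < 1 := by rwa [abs_of_nonneg hq0]
  have h1 : qPoch q q k ≠ 0 := (qPoch_pos hq0 hq1.le habs k).ne'
  have h2 : 1 - q * q ^ k ≠ 0 := (one_sub_mul_pow_pos hq0 hq1.le habs k).ne'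
  rw [qPoch_succ, qPoch_succ, ← pow_succ']
  rw [← pow_succ'] at h2
  field_simp

lemma qBinomialSeries_functional_eq (hq0 : 0 ≤ q) (hq1 : q < 1) (hν0 : 0 ≤ ν) (hν1 : ν ≤ 1)
    (hx : |x| < 1) :
    (1 - x) * qBinomialSeries q ν x = (1 - ν * x) * qBinomialSeries q ν (q * x) := by
  set c : ℕ → ℝ := fun k => qPoch ν q k / qPoch q q k
  have hc := abs_qPoch_div_qPoch_le hq0 hq1 hν0 hν1
  have hqx : |q * x| < 1 := by
    rw [abs_mul, abs_of_nonneg hq0]; nlinarith [abs_nonneg x]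
  have S1 : Summable fun k => c k * x ^ k := summable_mul_pow_of_abs_le hc hx
  have S2 : Summable fun k => c k * (q * x) ^ k := summable_mul_pow_of_abs_le hc hqx
  have hterm : ∀ k : ℕ, c (k + 1) * x ^ (k + 1) - c (k + 1) * (q * x) ^ (k + 1)
      = x * (c k * x ^ k - ν * (c k * (q * x) ^ k)) := fun k => by
    linear_combination x ^ (k + 1) * qPoch_div_qPoch_succ_mul hq0 hq1 ν k
  have key : qBinomialSeries q ν x - qBinomialSeries q ν (q * x)
      = x * (qBinomialSeries q ν x - ν * qBinomialSeries q ν (q * x)) := by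
    calc qBinomialSeries q ν x - qBinomialSeries q ν (q * x)
        = ∑' k, (c k * x ^ k - c k * (q * x) ^ k) := (S1.tsum_sub S2).symm
      _ = ∑' k, (c (k + 1) * x ^ (k + 1) - c (k + 1) * (q * x) ^ (k + 1)) := by
          rw [(S1.sub S2).tsum_eq_zero_add]; simp
      _ = x * (∑' k, c k * x ^ k - ν * ∑' k, c k * (q * x) ^ k) := by
          rw [tsum_congr hterm, tsum_mul_left, S1.tsum_sub (S2.mul_left ν), tsum_mul_left]
  linear_combination key

lemma qPoch_mul_qBinomialSeries (hq0 : 0 ≤ q) (hq1 : q < 1) (hν0 : 0 ≤ ν) (hν1 : ν ≤ 1)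
    (hx : |x| < 1) (n : ℕ) :
    qPoch x q n * qBinomialSeries q ν x = qPoch (x * ν) q n * qBinomialSeries q ν (q ^ n * x) := by
  induction n with
  | zero => simp [qPoch]
  | succ n ih =>
    have hxn : |q ^ n * x| < 1 := by
      rw [abs_mul, abs_of_nonneg (pow_nonneg hq0 n)]
      nlinarith [abs_nonneg x, pow_le_one₀ (n := n) hq0 hq1.le, pow_nonneg hq0 n]
    have hfe := qBinomialSeries_functional_eq hq0 hq1 hν0 hν1 hxn
    rw [show q * (q ^ n * x) = q ^ (n + 1) * x by ring] at hfe
    rw [qPoch_succ, qPoch_succ]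
    linear_combination (1 - x * q ^ n) * ih + qPoch (x * ν) q n * hfe

theorem qPochInf_mul_qBinomialSeries (hq0 : 0 ≤ q) (hq1 : q < 1) (hν0 : 0 ≤ ν) (hν1 : ν ≤ 1)
    (hx : |x| < 1) : qPochInf x q * qBinomialSeries q ν x = qPochInf (x * ν) q := by
  have hcont : ContinuousAt (qBinomialSeries q ν) 0 :=
    (hasDerivAt_tsum_mul_pow (abs_qPoch_div_qPoch_le hq0 hq1 hν0 hν1) (by simp)).continuousAt
  have hzero : qBinomialSeries q ν 0 = 1 := by
    rw [qBinomialSeries, tsum_eq_single 0 fun k hk => by simp [hk]]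
    simp [qPoch]
  have hlim : Tendsto (fun n : ℕ => qBinomialSeries q ν (q ^ n * x)) atTop (𝓝 1) := by
    rw [← hzero]
    refine hcont.tendsto.comp ?_
    simpa using (tendsto_pow_atTop_nhds_zero_of_lt_one hq0 hq1).mul_const x
  refine tendsto_nhds_unique ((tendsto_qPoch hq0 hq1 x).mul_const _) ?_
  simpa [qPoch_mul_qBinomialSeries hq0 hq1 hν0 hν1 hx] using
    (tendsto_qPoch hq0 hq1 (x * ν)).mul hlim

lemma hasDerivAt_qBinomialSeries (hq0 : 0 ≤ q) (hq1 : q < 1) (hν0 : 0 ≤ ν) (hν1 : ν ≤ 1)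
    (hx : |x| < 1) :
    HasDerivAt (qBinomialSeries q ν)
      (qBinomialSeries q ν x * (ν * qPochLogDeriv q (x * ν) - qPochLogDeriv q x)) x := by
  have hν : ∀ {y : ℝ}, |y| < 1 → |y * ν| < 1 := fun hy => by
    rw [abs_mul, abs_of_nonneg hν0]; nlinarith [abs_nonneg ‹ℝ›]
  have hexp : ∀ {y : ℝ}, |y| < 1 →
      qBinomialSeries q ν y = exp (qPochLog q (y * ν) - qPochLog q y) := fun {y} hy => by
    rw [exp_sub, eq_div_iff (exp_pos _).ne', ← qPochInf_eq_exp_qPochLog hq0 hq1 hy,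
      ← qPochInf_eq_exp_qPochLog hq0 hq1 (hν hy), mul_comm,
      qPochInf_mul_qBinomialSeries hq0 hq1 hν0 hν1 hy]
  have hL : HasDerivAt (fun y => qPochLog q (y * ν) - qPochLog q y)
      (qPochLogDeriv q (x * ν) * ν - qPochLogDeriv q x) x :=
    (((hasDerivAt_qPochLog hq0 hq1 (hν hx)).comp x (hasDerivAt_mul_const ν)).sub
      (hasDerivAt_qPochLog hq0 hq1 hx) :)
  have hev : qBinomialSeries q ν =ᶠ[𝓝 x] fun y => exp (qPochLog q (y * ν) - qPochLog q y) := by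
    filter_upwards [isOpen_lt continuous_abs continuous_const |>.mem_nhds hx] with y hy
    exact hexp hy
  rw [hexp hx, mul_comm ν]
  exact hL.exp.congr_of_eventuallyEq hev

lemma log_qGamma (hq0 : 0 < q) (hq1 : q < 1) {z : ℝ} (hz : 0 < z) :
    log (qGamma q z) = (1 - z) * log (1 - q) + log (qPochInf q q) - qPochLog q (q ^ z) := by
  have hqz : |q ^ z| < 1 := by
    rw [abs_of_pos (rpow_pos_of_pos hq0 z)]; exact rpow_lt_one hq0.le hq1 hz
  have h1q : 0 < 1 - q := sub_pos.2 hq1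
  have hinf : 0 < qPochInf q q := qPochInf_pos hq0.le hq1 (by rwa [abs_of_pos hq0])
  rw [qGamma, qPochInf_eq_exp_qPochLog hq0.le hq1 hqz,
    log_div (mul_pos (rpow_pos_of_pos h1q _) hinf).ne' (exp_pos _).ne',
    log_mul (rpow_pos_of_pos h1q _).ne' hinf.ne', log_rpow h1q, log_exp]

lemma qDigamma_eq (hq0 : 0 < q) (hq1 : q < 1) {Z : ℝ} (hZ : 0 < Z) :
    qDigamma q Z = -log (1 - q) - log q * (q ^ Z * qPochLogDeriv q (q ^ Z)) := by
  have hqZ : |q ^ Z| < 1 := by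
    rw [abs_of_pos (rpow_pos_of_pos hq0 Z)]; exact rpow_lt_one hq0.le hq1 hZ
  have hev : (fun z => log (qGamma q z)) =ᶠ[𝓝 Z]
      fun z => (1 - z) * log (1 - q) + log (qPochInf q q) - qPochLog q (q ^ z) := by
    filter_upwards [isOpen_Ioi.mem_nhds hZ] with z hz
    exact log_qGamma hq0 hq1 hz
  have hderiv : HasDerivAt
      (fun z => (1 - z) * log (1 - q) + log (qPochInf q q) - qPochLog q (q ^ z))
      (-log (1 - q) - qPochLogDeriv q (q ^ Z) * (q ^ Z * log q)) Z := by
    have h1 : HasDerivAt (fun z : ℝ => (1 - z) * log (1 - q)) (-log (1 - q)) Z := by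
      simpa using ((hasDerivAt_id Z).const_sub 1).mul_const (log (1 - q))
    exact (h1.add_const _).sub
      ((hasDerivAt_qPochLog hq0.le hq1 hqZ).comp Z (hasStrictDerivAt_const_rpow hq0 Z).hasDerivAt)
  rw [qDigamma, hev.deriv_eq, hderiv.deriv]
  ring

lemma tsum_natCast_mul_mul_pow (c : ℕ → ℝ) (x : ℝ) :
    ∑' k : ℕ, (k : ℝ) * (c k * x ^ k) = x * ∑' k : ℕ, c k * (k * x ^ (k - 1)) := by
  rw [← tsum_mul_left]
  congr 1 with k
  cases k with
  | zero => simp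
  | succ k => rw [Nat.add_sub_cancel, pow_succ]; ring

/-- The expectation of the stationary gap distribution:
E(G) = (Ψ_q(log_q α) - Ψ_q(log_q(αν)))/log q. -/
theorem stmt_12 (q ν α : ℝ) (hq0 : 0 < q) (hq1 : q < 1) (hν0 : 0 < ν) (hν1 : ν < 1)
    (hα0 : 0 < α) (hα1 : α < 1) :
    ∑' k : ℕ, (k : ℝ) *
        (qPochInf α q / qPochInf (α*ν) q * (qPoch ν q k / qPoch q q k) * α ^ k)
      = (qDigamma q (Real.log α / Real.log q) - qDigamma q (Real.log (α*ν) / Real.log q))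
          / Real.log q := by
  have hαν0 : 0 < α * ν := mul_pos hα0 hν0
  have hαν1 : α * ν < 1 := mul_lt_one_of_nonneg_of_lt_one_left hα0.le hα1 hν1.le
  have hα : |α| < 1 := by rwa [abs_of_pos hα0]
  have hlogq : log q < 0 := log_neg hq0 hq1
  have hP : qPochInf α q / qPochInf (α * ν) q * qBinomialSeries q ν α = 1 := by
    rw [div_mul_eq_mul_div, qPochInf_mul_qBinomialSeries hq0.le hq1 hν0.le hν1.le hα,
      div_self (qPochInf_pos hq0.le hq1 (by rwa [abs_of_pos hαν0])).ne']
  have hF' := (hasDerivAt_tsum_mul_pow (abs_qPoch_div_qPoch_le hq0.le hq1 hν0.le hν1.le) hα).unique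
    (hasDerivAt_qBinomialSeries hq0.le hq1 hν0.le hν1.le hα)
  have hΨα := qDigamma_eq hq0 hq1 (div_pos_of_neg_of_neg (log_neg hα0 hα1) hlogq)
  have hΨαν := qDigamma_eq hq0 hq1 (div_pos_of_neg_of_neg (log_neg hαν0 hαν1) hlogq)
  have hlogb : ∀ {a : ℝ}, 0 < a → q ^ (log a / log q) = a := rpow_logb hq0 hq1.ne
  rw [hlogb hα0] at hΨα
  rw [hlogb hαν0] at hΨαν
  have hmean : ∑' k : ℕ, (k : ℝ) *
        (qPochInf α q / qPochInf (α * ν) q * (qPoch ν q k / qPoch q q k) * α ^ k)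
      = qPochInf α q / qPochInf (α * ν) q *
          ∑' k : ℕ, (k : ℝ) * (qPoch ν q k / qPoch q q k * α ^ k) := by
    rw [← tsum_mul_left]
    congr 1 with k
    ring
  rw [hmean, tsum_natCast_mul_mul_pow, hF', hΨα, hΨαν, eq_div_iff hlogq.ne]
  linear_combination (α * (ν * qPochLogDeriv q (α * ν) - qPochLogDeriv q α) * log q) * hP
end
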